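/- For a real α, the integral ∫₀^∞ δ^α · f_{n,q,γ}(δ) dδ is finite if and only if γ − q < α < γ + 1, where f_{n,q,γ} is the probability density defined piecewise by f(δ) = C₁·δ^{q−γ−1} for 0 ≤ δ ≤ 1 and f(δ) = C₂·δ^{q−γ−1}·B(1/δ²;(q+1)/2,(n−q)/2) for δ > 1 with positive constants C₁ = (q−γ)·ω_{γ+1}ω_{n+1}/(ω_{n−(q−γ)+1}ω_{q+1}) and C₂ = (q−γ)·ω_{γ+1}ω_{n−q}/(2ω_{n−(q−γ)+1}). -/

import Mathlib

/-!
On `(0, 1]` the density is `C₁ δ^(q-γ-1)`, so the moment converges at `0` iff `α + q - γ - 1 > -1`.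
For `δ > 1` it is `C₂ δ^(q-γ-1) B(δ⁻²; (q+1)/2, (n-q)/2)`, and `B(x; a, b) ≍ x^a / a` as `x → 0`,
since the factor `(1 - t)^(b-1)` of the integrand stays between `(3/4)^(b-1)` and `1` for
`t ≤ 1/4`. Hence the density is `≍ δ^(-γ-2)` at infinity and the moment converges there iff
`α - γ - 2 < -1`. In between, `B(·; a, b)` is continuous on `[0, 1]` (as `a ≥ 1`, `b > 0`), so the
moment is integrable over `(1, 2]`.
-/

open Real MeasureTheory

/-- Surface area of the unit sphere `S^{n-1}`: `ω_n = 2 π^{n/2} / Γ(n/2)`. -/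
noncomputable def sphereArea (m : ℕ) : ℝ :=
  2 * Real.pi ^ ((m : ℝ) / 2) / Real.Gamma ((m : ℝ) / 2)

/-- Incomplete beta function `B(x; α, β) = ∫₀ˣ t^{α-1} (1-t)^{β-1} dt`. -/
noncomputable def incBeta (x α β : ℝ) : ℝ :=
  ∫ t in (0 : ℝ)..x, t ^ (α - 1) * (1 - t) ^ (β - 1)

/-- The density `f_{n,q,γ}` of `d(o, E ∩ L)`. -/
noncomputable def distDensity (n q γ : ℕ) (δ : ℝ) : ℝ :=
  if δ < 0 then 0
  else if δ ≤ 1 then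
    ((q : ℝ) - γ) * (sphereArea (γ + 1) * sphereArea (n + 1) /
        (sphereArea (n - (q - γ) + 1) * sphereArea (q + 1))) * δ ^ (q - γ - 1)
  else
    ((q : ℝ) - γ) * (sphereArea (γ + 1) * sphereArea (n - q) /
        (2 * sphereArea (n - (q - γ) + 1))) * δ ^ (q - γ - 1) *
      incBeta (1 / δ ^ 2) (((q : ℝ) + 1) / 2) (((n : ℝ) - q) / 2)

open Set

theorem integrableOn_iff_of_le_mul_of_mul_le {X : Type*} [MeasurableSpace X] {μ : Measure X}
    {s : Set X} {f g : X → ℝ} {m M : ℝ} (hs : MeasurableSet s) (hm : 0 < m)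
    (hf : AEStronglyMeasurable f (μ.restrict s)) (hg : AEStronglyMeasurable g (μ.restrict s))
    (hg₀ : ∀ x ∈ s, 0 ≤ g x) (hbounds : ∀ x ∈ s, m * g x ≤ f x ∧ f x ≤ M * g x) :
    IntegrableOn f s μ ↔ IntegrableOn g s μ := by
  refine ⟨fun hfi => hfi.const_mul m⁻¹ |>.mono' hg ?_, fun hgi => hgi.const_mul M |>.mono' hf ?_⟩
  all_goals filter_upwards [ae_restrict_mem hs] with x hx
  · rw [norm_of_nonneg (hg₀ x hx), le_inv_mul_iff₀ hm]
    exact (hbounds x hx).1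
  · have hfx : 0 ≤ f x := (mul_nonneg hm.le (hg₀ x hx)).trans (hbounds x hx).1
    rw [norm_of_nonneg hfx]
    exact (hbounds x hx).2

theorem integrableOn_Ioc_rpow_iff {r t : ℝ} (ht : 0 < t) :
    IntegrableOn (fun x : ℝ => x ^ r) (Ioc 0 t) ↔ -1 < r := by
  rw [integrableOn_Ioc_iff_integrableOn_Ioo, intervalIntegral.integrableOn_Ioo_rpow_iff ht]

theorem rpow_mem_uIcc_of_mem_Icc {c d y r : ℝ} (hc : 0 < c) (hy : y ∈ Icc c d) :
    y ^ r ∈ uIcc (c ^ r) (d ^ r) := by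
  rcases le_total 0 r with hr | hr
  · exact mem_uIcc.2 <| Or.inl ⟨rpow_le_rpow hc.le hy.1 hr, rpow_le_rpow (hc.le.trans hy.1) hy.2 hr⟩
  · exact mem_uIcc.2 <| Or.inr ⟨rpow_le_rpow_of_nonpos (hc.trans_le hy.1) hy.2 hr,
      rpow_le_rpow_of_nonpos hc hy.1 hr⟩

theorem integral_rpow_mul_mem_Icc {g : ℝ → ℝ} {x a m M : ℝ} (ha : 0 < a) (hx : 0 ≤ x)
    (hg : ContinuousOn g (Icc 0 x)) (hgb : ∀ t ∈ Icc 0 x, g t ∈ Icc m M) :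
    (∫ t in 0..x, t ^ (a - 1) * g t) ∈ Icc (m * (x ^ a / a)) (M * (x ^ a / a)) := by
  have hpow : IntervalIntegrable (fun t : ℝ => t ^ (a - 1)) volume 0 x :=
    intervalIntegral.intervalIntegrable_rpow' (by linarith)
  have hprod : IntervalIntegrable (fun t => t ^ (a - 1) * g t) volume 0 x :=
    hpow.mul_continuousOn (by rwa [uIcc_of_le hx])
  have hconst (c : ℝ) : (∫ t in 0..x, t ^ (a - 1) * c) = c * (x ^ a / a) := by
    rw [intervalIntegral.integral_mul_const, integral_rpow (Or.inl (by linarith)), sub_add_cancel,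
      zero_rpow ha.ne', sub_zero, mul_comm]
  rw [← hconst m, ← hconst M]
  exact ⟨intervalIntegral.integral_mono_on hx (hpow.mul_const m) hprod fun t ht =>
      mul_le_mul_of_nonneg_left (hgb t ht).1 (rpow_nonneg ht.1 _),
    intervalIntegral.integral_mono_on hx hprod (hpow.mul_const M) fun t ht =>
      mul_le_mul_of_nonneg_left (hgb t ht).2 (rpow_nonneg ht.1 _)⟩

section IncBeta

variable {a b : ℝ}

theorem continuousOn_incBeta (ha : 1 ≤ a) (hb : 0 < b) :
    ContinuousOn (fun x => incBeta x a b) (Icc 0 1) := by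
  have hsing : IntervalIntegrable (fun t : ℝ => (1 - t) ^ (b - 1)) volume 0 1 := by
    simpa using ((intervalIntegral.intervalIntegrable_rpow' (r := b - 1) (a := 0) (b := 1)
      (by linarith)).comp_sub_left 1).symm
  have hint := hsing.continuousOn_mul (g := fun t : ℝ => t ^ (a - 1))
    (continuousOn_id.rpow_const fun _ _ => Or.inr (by linarith))
  rw [intervalIntegrable_iff_integrableOn_Icc_of_le zero_le_one, ← uIcc_of_le zero_le_one] at hint
  rw [← uIcc_of_le zero_le_one]
  exact intervalIntegral.continuousOn_primitive_interval hint

theorem exists_incBeta_bounds (ha : 0 < a) :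
    ∃ m M : ℝ, 0 < m ∧ ∀ x ∈ Icc (0 : ℝ) (1 / 4), m * x ^ a ≤ incBeta x a b ∧
      incBeta x a b ≤ M * x ^ a := by
  refine ⟨min ((3 / 4 : ℝ) ^ (b - 1)) 1 / a, max ((3 / 4 : ℝ) ^ (b - 1)) 1 / a,
    div_pos (lt_min (by positivity) one_pos) ha, fun x hx => ?_⟩
  obtain ⟨hlow, hup⟩ := integral_rpow_mul_mem_Icc (g := fun t => (1 - t) ^ (b - 1)) ha hx.1
    (ContinuousOn.rpow_const (by fun_prop) fun t ht => Or.inl (by linarith [ht.2, hx.2]))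
    fun t ht => by
      have := rpow_mem_uIcc_of_mem_Icc (c := 3 / 4) (d := 1) (y := 1 - t) (r := b - 1)
        (by norm_num) ⟨by linarith [ht.2, hx.2], by linarith [ht.1]⟩
      rwa [one_rpow] at this
  exact ⟨(by ring : _ = _).trans_le hlow, hup.trans_eq (by ring)⟩

end IncBeta

theorem sphereArea_pos {m : ℕ} (hm : 0 < m) : 0 < sphereArea m := by
  have := Gamma_pos_of_pos (by positivity : (0 : ℝ) < m / 2)
  unfold sphereArea
  positivity

section DistDensity

variable {n q γ : ℕ} {α δ : ℝ}

noncomputable def distDensityC₁ (n q γ : ℕ) : ℝ :=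
  ((q : ℝ) - γ) * (sphereArea (γ + 1) * sphereArea (n + 1) /
    (sphereArea (n - (q - γ) + 1) * sphereArea (q + 1)))

noncomputable def distDensityC₂ (n q γ : ℕ) : ℝ :=
  ((q : ℝ) - γ) * (sphereArea (γ + 1) * sphereArea (n - q) / (2 * sphereArea (n - (q - γ) + 1)))

noncomputable def distDensityTail (n q γ : ℕ) (δ : ℝ) : ℝ :=
  distDensityC₂ n q γ * δ ^ (q - γ - 1) *
    incBeta (1 / δ ^ 2) (((q : ℝ) + 1) / 2) (((n : ℝ) - q) / 2)

theorem distDensityC₁_pos (hγq : γ < q) : 0 < distDensityC₁ n q γ := by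
  have hqγ : (0 : ℝ) < q - γ := sub_pos.2 (by exact_mod_cast hγq)
  exact mul_pos hqγ <| div_pos (mul_pos (sphereArea_pos (by omega)) (sphereArea_pos (by omega)))
    (mul_pos (sphereArea_pos (by omega)) (sphereArea_pos (by omega)))

theorem distDensityC₂_pos (hγq : γ < q) (hqn : q < n) : 0 < distDensityC₂ n q γ := by
  have hqγ : (0 : ℝ) < q - γ := sub_pos.2 (by exact_mod_cast hγq)
  exact mul_pos hqγ <| div_pos (mul_pos (sphereArea_pos (by omega)) (sphereArea_pos (by omega)))
    (mul_pos two_pos (sphereArea_pos (by omega)))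

theorem distDensity_of_mem_Icc (hδ : δ ∈ Icc 0 1) :
    distDensity n q γ δ = distDensityC₁ n q γ * δ ^ (q - γ - 1) := by
  rw [distDensity, if_neg (not_lt.2 hδ.1), if_pos hδ.2, distDensityC₁]

theorem distDensity_of_one_lt (hδ : 1 < δ) : distDensity n q γ δ = distDensityTail n q γ δ := by
  rw [distDensity, if_neg (by linarith), if_neg (not_le.2 hδ), distDensityTail, distDensityC₂]

theorem continuousOn_distDensityTail (hq : 0 < q) (hqn : q < n) :
    ContinuousOn (distDensityTail n q γ) (Ici 1) := by
  have hne : ∀ δ ∈ Ici (1 : ℝ), δ ^ 2 ≠ 0 := fun δ hδ => pow_ne_zero 2 (by linarith [mem_Ici.1 hδ])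
  have hmaps : MapsTo (fun δ : ℝ => 1 / δ ^ 2) (Ici 1) (Icc 0 1) := fun δ hδ =>
    ⟨by positivity, div_le_one_of_le₀ (one_le_pow₀ hδ) (by positivity)⟩
  have hincBeta := (continuousOn_incBeta (a := ((q : ℝ) + 1) / 2) (b := ((n : ℝ) - q) / 2)
    (by linarith [show (1 : ℝ) ≤ q by exact_mod_cast hq])
    (by linarith [show (q : ℝ) < n by exact_mod_cast hqn])).comp
    (continuousOn_const.div (by fun_prop) hne) hmaps
  exact (continuousOn_const.mul (continuous_pow _).continuousOn).mul hincBeta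

theorem continuousOn_moment_distDensityTail (hq : 0 < q) (hqn : q < n) :
    ContinuousOn (fun δ => δ ^ α * distDensityTail n q γ δ) (Ici 1) :=
  (continuousOn_id.rpow_const fun δ hδ => Or.inl (show (0 : ℝ) < δ by
    linarith [mem_Ici.1 hδ]).ne').mul (continuousOn_distDensityTail hq hqn)

theorem exists_distDensity_tail_bounds (hγq : γ < q) (hqn : q < n) :
    ∃ m M : ℝ, 0 < m ∧ ∀ δ ∈ Ioi (2 : ℝ), m * δ ^ (-(γ : ℝ) - 2) ≤ distDensity n q γ δ ∧
      distDensity n q γ δ ≤ M * δ ^ (-(γ : ℝ) - 2) := by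
  obtain ⟨m, M, hm, hincBeta⟩ := exists_incBeta_bounds (a := ((q : ℝ) + 1) / 2)
    (b := ((n : ℝ) - q) / 2) (by positivity)
  have hC := distDensityC₂_pos hγq hqn
  refine ⟨distDensityC₂ n q γ * m, distDensityC₂ n q γ * M, mul_pos hC hm, fun δ hδ => ?_⟩
  have hδ₀ : 0 < δ := by linarith [mem_Ioi.1 hδ]
  have hpow : δ ^ (q - γ - 1) * (1 / δ ^ 2) ^ (((q : ℝ) + 1) / 2) = δ ^ (-(γ : ℝ) - 2) := by
    rw [← rpow_natCast, one_div, ← rpow_natCast δ 2, ← rpow_neg hδ₀.le, ← rpow_mul hδ₀.le,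
      ← rpow_add hδ₀]
    push_cast [Nat.sub_sub, Nat.cast_sub (show γ + 1 ≤ q by omega)]
    ring_nf
  obtain ⟨hlow, hup⟩ := hincBeta (1 / δ ^ 2) ⟨by positivity, by
    rw [div_le_div_iff₀ (by positivity) (by norm_num)]; nlinarith [mem_Ioi.1 hδ]⟩
  have hcoef : 0 ≤ distDensityC₂ n q γ * δ ^ (q - γ - 1) := mul_nonneg hC.le (by positivity)
  rw [distDensity_of_one_lt (by linarith [mem_Ioi.1 hδ]), distDensityTail, ← hpow]
  exact ⟨(by ring : _ = _).trans_le (mul_le_mul_of_nonneg_left hlow hcoef),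
    (mul_le_mul_of_nonneg_left hup hcoef).trans_eq (by ring)⟩

theorem integrableOn_moment_Ioc_zero_one_iff (hγq : γ < q) :
    IntegrableOn (fun δ => δ ^ α * distDensity n q γ δ) (Ioc 0 1) ↔ (γ : ℝ) - q < α := by
  have heq : EqOn (fun δ => δ ^ α * distDensity n q γ δ)
      (fun δ => distDensityC₁ n q γ * δ ^ (α + (q - γ - 1 : ℕ))) (Ioc 0 1) := fun δ hδ => by
    dsimp only
    rw [distDensity_of_mem_Icc (Ioc_subset_Icc_self hδ), rpow_add hδ.1, rpow_natCast]
    ring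
  rw [integrableOn_congr_fun heq measurableSet_Ioc, IntegrableOn,
    integrable_const_mul_iff (distDensityC₁_pos hγq).ne'.isUnit, ← IntegrableOn,
    integrableOn_Ioc_rpow_iff one_pos]
  push_cast [Nat.sub_sub, Nat.cast_sub (show γ + 1 ≤ q by omega)]
  constructor <;> intro h <;> linarith

theorem integrableOn_moment_Ioc_one_two (hq : 0 < q) (hqn : q < n) :
    IntegrableOn (fun δ => δ ^ α * distDensity n q γ δ) (Ioc 1 2) := by
  have hcont := (continuousOn_moment_distDensityTail (α := α) (γ := γ) hq hqn).mono
    (Icc_subset_Ici_self : Icc (1 : ℝ) 2 ⊆ Ici 1)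
  refine (hcont.integrableOn_Icc.mono_set Ioc_subset_Icc_self).congr_fun (fun δ hδ => ?_)
    measurableSet_Ioc
  rw [distDensity_of_one_lt hδ.1]

theorem integrableOn_moment_Ioi_two_iff (hγq : γ < q) (hqn : q < n) :
    IntegrableOn (fun δ => δ ^ α * distDensity n q γ δ) (Ioi 2) ↔ α < γ + 1 := by
  obtain ⟨m, M, hm, hbounds⟩ := exists_distDensity_tail_bounds hγq hqn
  have hcont : ContinuousOn (fun δ => δ ^ α * distDensity n q γ δ) (Ioi 2) :=
    ((continuousOn_moment_distDensityTail (by omega) hqn).mono (Ioi_subset_Ici one_le_two)).congr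
      fun δ hδ => by rw [distDensity_of_one_lt (by linarith [mem_Ioi.1 hδ])]
  have hcompare : ∀ δ ∈ Ioi (2 : ℝ), m * δ ^ (α - γ - 2) ≤ δ ^ α * distDensity n q γ δ ∧
      δ ^ α * distDensity n q γ δ ≤ M * δ ^ (α - γ - 2) := fun δ hδ => by
    have hδ₀ : 0 < δ := by linarith [mem_Ioi.1 hδ]
    have hδα : 0 ≤ δ ^ α := rpow_nonneg hδ₀.le _
    rw [show α - γ - 2 = α + (-(γ : ℝ) - 2) by ring, rpow_add hδ₀]
    exact ⟨(by ring : _ = _).trans_le (mul_le_mul_of_nonneg_left (hbounds δ hδ).1 hδα),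
      (mul_le_mul_of_nonneg_left (hbounds δ hδ).2 hδα).trans_eq (by ring)⟩
  rw [integrableOn_iff_of_le_mul_of_mul_le measurableSet_Ioi hm
    (hcont.aestronglyMeasurable measurableSet_Ioi)
    (by fun_prop : Measurable fun δ : ℝ => δ ^ (α - γ - 2)).aestronglyMeasurable
    (fun δ hδ => rpow_nonneg (by linarith [mem_Ioi.1 hδ]) _) hcompare,
    integrableOn_Ioi_rpow_iff two_pos]
  constructor <;> intro h <;> linarith

end DistDensity

theorem moment_finite_iff_general (n q γ : ℕ) (α : ℝ)
    (hq1 : 1 ≤ q) (hq2 : q ≤ n - 1) (hγ : γ ≤ q - 1) :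
    IntegrableOn (fun δ : ℝ => δ ^ α * distDensity n q γ δ) (Set.Ioi 0) ↔
      ((γ : ℝ) - q < α ∧ α < (γ : ℝ) + 1) := by
  have hγq : γ < q := by omega
  have hqn : q < n := by omega
  rw [← Ioc_union_Ioi_eq_Ioi zero_le_one, ← Ioc_union_Ioi_eq_Ioi one_le_two, integrableOn_union,
    integrableOn_union, integrableOn_moment_Ioc_zero_one_iff hγq,
    integrableOn_moment_Ioi_two_iff hγq hqn]
  simp only [integrableOn_moment_Ioc_one_two hq1 hqn, true_and]

theorem moment_finite_iff (n q γ : ℕ) (α : ℝ)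
    (hn : 2 ≤ n) (hq1 : 1 ≤ q) (hq2 : q ≤ n - 1) (hγ : γ ≤ q - 1) :
    IntegrableOn (fun δ : ℝ => δ ^ α * distDensity n q γ δ) (Set.Ioi 0) ↔
      ((γ : ℝ) - q < α ∧ α < (γ : ℝ) + 1) :=
  moment_finite_iff_general n q γ α hq1 hq2 hγ
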